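/- In the additive setting below with ρ = ρ₊, assume either (a) φ(t,0) = 0 = φ(0,t) for all real t ≥ 0, or (b) for every real a > 0, φ(t,a) → ∞ and φ(a,t) → ∞ as the real number t → ∞. If y₀ ∈ Ch(ℬ) and x₀ ∈ Ch(𝒜) satisfy I¹_{y₀} ∩ Ch(𝒜) = {x₀}, then |Tf(y₀)| = |f(x₀)| for every f ∈ A. -/

import Mathlib

open scoped ZeroAtInfty Pointwise
open Filter Topology

set_option maxHeartbeats 1000000
set_option synthInstance.maxHeartbeats 1000000

/-- The (inc) property for a two-variable function `φ : ℂ → ℂ → ℝ`. -/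
def IncProp (φ : ℂ → ℂ → ℝ) : Prop :=
  (∀ s₁ s₂ t : ℂ, ‖s₁‖ ≤ ‖s₂‖ →
      φ s₁ t ≤ φ s₂ t ∧ φ t s₁ ≤ φ t s₂) ∧
  (∀ s₁ s₂ t : ℂ, ‖s₁‖ < ‖s₂‖ → t ≠ 0 →
      φ s₁ t < φ s₂ t ∧ φ t s₁ < φ t s₂)

/-- The (con) property. -/
def ConProp (φ : ℂ → ℂ → ℝ) : Prop :=
  ∀ (n : ℕ), 0 < n → ∀ (s : Fin n → ℂ) (t : ℂ),
    φ ((1 / (n : ℂ)) * ∑ i, s i) t ≤ (1 / (n : ℝ)) * ∑ i, φ (s i) t ∧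
    φ t ((1 / (n : ℂ)) * ∑ i, s i) ≤ (1 / (n : ℝ)) * ∑ i, φ t (s i)

/-- sup of φ(f,g) over the space (the supremum norm of the nonnegative function φ(f,g)). -/
noncomputable def supPhi {X : Type*} (φ : ℂ → ℂ → ℝ) (f g : X → ℂ) : ℝ :=
  ⨆ x, φ (f x) (g x)

noncomputable def rhoPlus {X : Type*} (φ : ℂ → ℂ → ℝ) (f g : X → ℂ) : ℝ :=
  supPhi φ f g + supPhi φ g f

noncomputable def rhoMax {X : Type*} (φ : ℂ → ℂ → ℝ) (f g : X → ℂ) : ℝ :=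
  max (supPhi φ f g) (supPhi φ g f)

noncomputable def rhoPlusScalar (φ : ℂ → ℂ → ℝ) (r s : ℂ) : ℝ := φ r s + φ s r

noncomputable def rhoMaxScalar (φ : ℂ → ℂ → ℝ) (r s : ℂ) : ℝ := max (φ r s) (φ s r)

/-- Generic ρ, with a Boolean selecting between ρ₊ (true) and ρ_max (false). -/
noncomputable def rhoGen {X : Type*} (c : Bool) (φ : ℂ → ℂ → ℝ) (f g : X → ℂ) : ℝ :=
  if c then rhoPlus φ f g else rhoMax φ f g

noncomputable def rhoGenScalar (c : Bool) (φ : ℂ → ℂ → ℝ) (r s : ℂ) : ℝ :=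
  if c then rhoPlusScalar φ r s else rhoMaxScalar φ r s

/-- `x₀` is a strong boundary point of `A ⊆ C₀(X)`. -/
def IsStrongBoundaryPoint {X : Type*} [TopologicalSpace X]
    (A : Set C₀(X, ℂ)) (x₀ : X) : Prop :=
  ∀ ε > (0 : ℝ), ∀ V ∈ 𝓝 x₀, ∃ f ∈ A, f x₀ = 1 ∧ ‖f‖ = 1 ∧
    ∀ x ∉ V, ‖f x‖ < ε

/-- V_{x₀}(A). -/
def Vset {X : Type*} [TopologicalSpace X] (A : Set C₀(X, ℂ)) (x₀ : X) : Set C₀(X, ℂ) :=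
  {f ∈ A | f x₀ = 1 ∧ ‖f‖ = 1}

/-- F_{x₀}(A). -/
def Fset {X : Type*} [TopologicalSpace X] (A : Set C₀(X, ℂ)) (x₀ : X) : Set C₀(X, ℂ) :=
  {f ∈ A | ‖f x₀‖ = 1 ∧ ‖f‖ = 1}

/-- The maximum modulus set M(f). -/
def maxSet {X : Type*} [TopologicalSpace X] (f : C₀(X, ℂ)) : Set X :=
  {x | ‖f x‖ = ‖f‖}

/-- The topological dual of a normed space (the old Mathlib `NormedSpace.Dual`, since removed). -/
abbrev NormedSpace.Dual (𝕜 : Type*) [NontriviallyNormedField 𝕜] (E : Type*)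
    [SeminormedAddCommGroup E] [NormedSpace 𝕜 E] : Type _ :=
  E →L[𝕜] 𝕜

/-- Evaluation at a point, as a continuous linear functional on a subspace of C₀(X). -/
noncomputable def evalDual {X : Type*} [TopologicalSpace X]
    (𝒜 : Submodule ℂ C₀(X, ℂ)) (x : X) : NormedSpace.Dual ℂ 𝒜 :=
  LinearMap.mkContinuous
    { toFun := fun f => (f : C₀(X, ℂ)) x
      map_add' := fun f g => rfl
      map_smul' := fun c f => rfl }
    1
    (fun f => by
      rw [one_mul]
      exact ((f : C₀(X, ℂ)).toBCF.norm_coe_le_norm x).trans_eq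
        ZeroAtInftyContinuousMap.norm_toBCF_eq_norm)

/-- `x` lies in the Choquet boundary of a subspace `𝒜` of `C₀(X)`: the evaluation functional is
an extreme point of the closed unit ball of the dual space. -/
def InChoquetBoundary {X : Type*} [TopologicalSpace X]
    (𝒜 : Submodule ℂ C₀(X, ℂ)) (x : X) : Prop :=
  evalDual 𝒜 x ∈
    Set.extremePoints ℝ (Metric.closedBall (0 : NormedSpace.Dual ℂ 𝒜) 1)

/-- A function algebra on `X`: a closed subalgebra of `C₀(X)` strongly separating points. -/
def IsFunctionAlgebra {X : Type*} [TopologicalSpace X]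
    (𝒜 : NonUnitalSubalgebra ℂ C₀(X, ℂ)) : Prop :=
  IsClosed (𝒜 : Set C₀(X, ℂ)) ∧
  (∀ x y : X, x ≠ y → ∃ f ∈ 𝒜, f x ≠ f y) ∧
  (∀ x : X, ∃ g ∈ 𝒜, g x ≠ (0 : ℂ))

/-- `|A| ⊆ |𝒜|`. -/
def ModulusSubset {X : Type*} [TopologicalSpace X]
    (A 𝒜 : Set C₀(X, ℂ)) : Prop :=
  ∀ f ∈ A, ∃ g ∈ 𝒜, ∀ x, ‖f x‖ = ‖g x‖

/-- The positive elements of a subset `S` of `C₀(X)`. -/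
def posPart {X : Type*} [TopologicalSpace X] (S : Set C₀(X, ℂ)) : Set C₀(X, ℂ) :=
  {f ∈ S | ∀ x, ∃ r : ℝ, 0 ≤ r ∧ f x = r}

/-!
Since `φ` is increasing in the moduli of its arguments, `ρ₊(f, f)` is a strictly increasing
function of `‖f‖`, so `T` preserves norms, and `ρ₊(f, g)` attains its largest possible value
`φ(‖f‖, ‖g‖) + φ(‖g‖, ‖f‖)` exactly when `|f|` and `|g|` attain their norms at a common point.
As `x₀ ∈ I¹_{y₀}`, every `h` with `Th ∈ V_{y₀}(B)` peaks at `x₀`; pairing with such `h`, and with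
peaking functions at `x₀`, shows that `T` sends functions peaking at `x₀` to functions peaking at
`y₀` with the same norm, and conversely. Finally, if `|f(x₀)| < m < |Tf(y₀)|`, pair `f` with `t u`,
where `u` peaks at `x₀` and is tiny off `{|f| < m}`: condition (a) or (b) provides `t` with
`ρ₊(f, t u) < φ(|Tf(y₀)|, t) + φ(t, |Tf(y₀)|) ≤ ρ₊(Tf, T(t u))`, a contradiction. The reverse
inequality is symmetric.
-/

namespace IncProp

variable {φ : ℂ → ℂ → ℝ} {a a' b b' : ℂ}

theorem apply_le_apply (hφ : IncProp φ) (ha : ‖a‖ ≤ ‖a'‖) (hb : ‖b‖ ≤ ‖b'‖) :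
    φ a b ≤ φ a' b' :=
  (hφ.1 a a' b ha).1.trans (hφ.1 b b' a' hb).2

theorem apply_congr (hφ : IncProp φ) (ha : ‖a‖ = ‖a'‖) (hb : ‖b‖ = ‖b'‖) : φ a b = φ a' b' :=
  (hφ.apply_le_apply ha.le hb.le).antisymm (hφ.apply_le_apply ha.ge hb.ge)

theorem apply_lt_apply_of_lt_left (hφ : IncProp φ) (ha : ‖a‖ < ‖a'‖) (hb : ‖b‖ ≤ ‖b'‖)
    (hb₀ : b ≠ 0) : φ a b < φ a' b' :=
  (hφ.2 a a' b ha hb₀).1.trans_le (hφ.1 b b' a' hb).2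

theorem apply_lt_apply_of_lt_right (hφ : IncProp φ) (ha : ‖a‖ ≤ ‖a'‖) (hb : ‖b‖ < ‖b'‖)
    (ha₀ : a' ≠ 0) : φ a b < φ a' b' :=
  (hφ.1 a a' b ha).1.trans_lt (hφ.2 b b' a' hb ha₀).2

theorem apply_le_ofReal (hφ : IncProp φ) {s t : ℝ} (ha : ‖a‖ ≤ s) (hb : ‖b‖ ≤ t) :
    φ a b ≤ φ s t :=
  hφ.apply_le_apply (by rwa [Complex.norm_of_nonneg ((norm_nonneg a).trans ha)])
    (by rwa [Complex.norm_of_nonneg ((norm_nonneg b).trans hb)])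

theorem apply_eq_ofReal (hφ : IncProp φ) {s t : ℝ} (ha : ‖a‖ = s) (hb : ‖b‖ = t) :
    φ a b = φ s t :=
  hφ.apply_congr (by rw [ha, Complex.norm_of_nonneg (ha ▸ norm_nonneg a)])
    (by rw [hb, Complex.norm_of_nonneg (hb ▸ norm_nonneg b)])

theorem strictMonoOn_diag (hφ : IncProp φ) :
    StrictMonoOn (fun s : ℝ => φ s s) (Set.Ici 0) := by
  intro s hs t ht hst
  have hst' : ‖(s : ℂ)‖ < ‖(t : ℂ)‖ := by
    rwa [Complex.norm_of_nonneg hs, Complex.norm_of_nonneg ht]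
  exact hφ.apply_lt_apply_of_lt_right hst'.le hst'
    (Complex.ofReal_ne_zero.2 (lt_of_le_of_lt hs hst).ne')

theorem norm_eq_of_apply_eq (hφ : IncProp φ) {s t : ℝ} (hs : 0 < s) (ht : 0 < t)
    (ha : ‖a‖ ≤ s) (hb : ‖b‖ ≤ t) (h : φ a b = φ s t) : ‖a‖ = s ∧ ‖b‖ = t := by
  have hs' : ‖(s : ℂ)‖ = s := Complex.norm_of_nonneg hs.le
  have ht' : ‖(t : ℂ)‖ = t := Complex.norm_of_nonneg ht.le
  have hb' : ‖b‖ = t := hb.eq_or_lt.resolve_right fun hlt => h.not_lt <|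
    hφ.apply_lt_apply_of_lt_right (ha.trans_eq hs'.symm) (hlt.trans_eq ht'.symm)
      (Complex.ofReal_ne_zero.2 hs.ne')
  have hb₀ : b ≠ 0 := norm_pos_iff.1 (hb' ▸ ht)
  refine ⟨ha.eq_or_lt.resolve_right fun hlt => h.not_lt ?_, hb'⟩
  exact hφ.apply_lt_apply_of_lt_left (hlt.trans_eq hs'.symm) (hb'.trans ht'.symm).le hb₀

end IncProp

theorem Continuous.exists_forall_ge_of_tendsto {Z α : Type*} [TopologicalSpace Z] [LinearOrder α]
    [TopologicalSpace α] [OrderTopology α] {g : Z → α} (hg : Continuous g) {L : α}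
    (hL : Tendsto g (cocompact Z) (𝓝 L)) {z₀ : Z} (hz₀ : L < g z₀) : ∃ z, ∀ y, g y ≤ g z :=
  hg.exists_forall_ge' z₀ ((hL.eventually (gt_mem_nhds hz₀)).mono fun _ => le_of_lt)

namespace ZeroAtInftyContinuousMap

variable {Z β : Type*} [TopologicalSpace Z] [SeminormedAddCommGroup β]

theorem norm_apply_le (F : C₀(Z, β)) (z : Z) : ‖F z‖ ≤ ‖F‖ :=
  (F.toBCF.norm_coe_le_norm z).trans_eq norm_toBCF_eq_norm

theorem exists_norm_apply_eq_norm [Nonempty Z] (F : C₀(Z, β)) : ∃ z, ‖F z‖ = ‖F‖ := by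
  by_cases hF : ∃ z₀, 0 < ‖F z₀‖
  · obtain ⟨z₀, hz₀⟩ := hF
    have hlim : Tendsto (fun z => ‖F z‖) (cocompact Z) (𝓝 0) := by
      simpa using (zero_at_infty F).norm
    obtain ⟨z, hz⟩ := F.continuous.norm.exists_forall_ge_of_tendsto hlim hz₀
    exact ⟨z, (F.norm_apply_le z).antisymm <|
      norm_toBCF_eq_norm.symm.trans_le ((F.toBCF.norm_le (norm_nonneg _)).2 hz)⟩
  · simp only [not_exists, not_lt] at hF
    obtain ⟨z⟩ := ‹Nonempty Z›
    have hF0 : ‖F‖ ≤ 0 := norm_toBCF_eq_norm.symm.trans_le ((F.toBCF.norm_le le_rfl).2 hF)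
    exact ⟨z, (F.norm_apply_le z).antisymm (hF0.trans (norm_nonneg _))⟩

end ZeroAtInftyContinuousMap

section SupPhi

open ZeroAtInftyContinuousMap

variable {Z W : Type*} [TopologicalSpace Z] [TopologicalSpace W] {φ : ℂ → ℂ → ℝ}

theorem apply_le_supPhi (hφ : IncProp φ) (F G : C₀(Z, ℂ)) (z : Z) :
    φ (F z) (G z) ≤ supPhi φ F G :=
  le_ciSup ⟨φ ‖F‖ ‖G‖, Set.forall_mem_range.2 fun y =>
    hφ.apply_le_ofReal (F.norm_apply_le y) (G.norm_apply_le y)⟩ z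

theorem supPhi_le_of_norm_le (hφ : IncProp φ) [Nonempty Z] {F G : C₀(Z, ℂ)} {s t : ℝ}
    (hF : ‖F‖ ≤ s) (hG : ‖G‖ ≤ t) : supPhi φ F G ≤ φ s t :=
  ciSup_le fun z =>
    hφ.apply_le_ofReal ((F.norm_apply_le z).trans hF) ((G.norm_apply_le z).trans hG)

theorem supPhi_self (hφ : IncProp φ) [Nonempty Z] (F : C₀(Z, ℂ)) :
    supPhi φ F F = φ ‖F‖ ‖F‖ := by
  obtain ⟨z, hz⟩ := F.exists_norm_apply_eq_norm
  refine (supPhi_le_of_norm_le hφ le_rfl le_rfl).antisymm ?_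
  rw [← hφ.apply_eq_ofReal hz hz]
  exact apply_le_supPhi hφ F F z

theorem norm_eq_of_rhoPlus_self_eq (hφ : IncProp φ) [Nonempty Z] [Nonempty W]
    {F : C₀(Z, ℂ)} {G : C₀(W, ℂ)} (h : rhoPlus φ F F = rhoPlus φ G G) : ‖F‖ = ‖G‖ := by
  simp only [rhoPlus, supPhi_self hφ] at h
  exact hφ.strictMonoOn_diag.injOn (norm_nonneg F) (norm_nonneg G) (by linarith)

theorem rhoPlusScalar_le_rhoPlus (hφ : IncProp φ) (F G : C₀(Z, ℂ)) (z : Z) :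
    rhoPlusScalar φ (F z) (G z) ≤ rhoPlus φ F G :=
  add_le_add (apply_le_supPhi hφ F G z) (apply_le_supPhi hφ G F z)

theorem rhoPlus_eq_of_norm_apply_eq (hφ : IncProp φ) [Nonempty Z] {F G : C₀(Z, ℂ)} {s t : ℝ}
    (hF : ‖F‖ ≤ s) (hG : ‖G‖ ≤ t) {z : Z} (hFz : ‖F z‖ = s) (hGz : ‖G z‖ = t) :
    rhoPlus φ F G = rhoPlusScalar φ s t := by
  refine (add_le_add (supPhi_le_of_norm_le hφ hF hG) (supPhi_le_of_norm_le hφ hG hF)).antisymm ?_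
  have hz := rhoPlusScalar_le_rhoPlus hφ F G z
  rwa [rhoPlusScalar, hφ.apply_eq_ofReal hFz hGz, hφ.apply_eq_ofReal hGz hFz] at hz

theorem exists_apply_eq_supPhi (hφc : Continuous fun p : ℂ × ℂ => φ p.1 p.2)
    (hφ : IncProp φ) [Nonempty Z] {F G : C₀(Z, ℂ)} (h : φ 0 0 < supPhi φ F G) :
    ∃ z, φ (F z) (G z) = supPhi φ F G := by
  obtain ⟨z₀, hz₀⟩ := exists_lt_of_lt_ciSup h
  have hcont : Continuous fun z => φ (F z) (G z) := hφc.comp (F.continuous.prodMk G.continuous)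
  have hlim : Tendsto (fun z => φ (F z) (G z)) (cocompact Z) (𝓝 (φ 0 0)) :=
    (hφc.tendsto (0, 0)).comp ((zero_at_infty F).prodMk_nhds (zero_at_infty G))
  obtain ⟨z, hz⟩ := hcont.exists_forall_ge_of_tendsto hlim hz₀
  exact ⟨z, (apply_le_supPhi hφ F G z).antisymm (ciSup_le hz)⟩

theorem exists_norm_eq_of_rhoPlus_eq (hφc : Continuous fun p : ℂ × ℂ => φ p.1 p.2)
    (hφ : IncProp φ) [Nonempty Z] {F G : C₀(Z, ℂ)} {s t : ℝ} (hs : 0 < s) (ht : 0 < t)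
    (hF : ‖F‖ ≤ s) (hG : ‖G‖ ≤ t) (h : rhoPlus φ F G = rhoPlusScalar φ s t) :
    ∃ z, ‖F z‖ = s ∧ ‖G z‖ = t := by
  have hsup : supPhi φ F G = φ s t := by
    have := supPhi_le_of_norm_le hφ hF hG
    have := supPhi_le_of_norm_le hφ hG hF
    simp only [rhoPlus, rhoPlusScalar] at h
    linarith
  have h₀ : φ 0 0 < φ s t :=
    hφ.apply_lt_apply_of_lt_right (by simp) (by simp [ht.ne']) (by simp [hs.ne'])
  obtain ⟨z, hz⟩ := exists_apply_eq_supPhi hφc hφ (hsup ▸ h₀)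
  exact ⟨z, hφ.norm_eq_of_apply_eq hs ht ((F.norm_apply_le z).trans hF)
    ((G.norm_apply_le z).trans hG) (hz.trans hsup)⟩

theorem norm_apply_eq_of_forall_nhds_rhoPlus_eq (hφc : Continuous fun p : ℂ × ℂ => φ p.1 p.2)
    (hφ : IncProp φ) [Nonempty Z] {F : C₀(Z, ℂ)} {p : Z} {s t : ℝ} (ht : 0 < t) (hs : 0 < s)
    (hF : ‖F‖ = t) (H : ∀ V ∈ 𝓝 p, ∃ G : C₀(Z, ℂ), ‖G‖ ≤ s ∧ (∀ z ∉ V, ‖G z‖ < s) ∧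
      rhoPlus φ F G = rhoPlusScalar φ t s) :
    ‖F p‖ = t := by
  have hclosed : IsClosed {z | ‖F z‖ = t} := isClosed_eq F.continuous.norm continuous_const
  refine hclosed.closure_subset (mem_closure_iff_nhds.2 fun V hV => ?_)
  obtain ⟨G, hG, hGV, hρ⟩ := H V hV
  obtain ⟨z, hFz, hGz⟩ := exists_norm_eq_of_rhoPlus_eq hφc hφ ht hs hF.le hG hρ
  exact ⟨z, not_not.1 fun hz => (hGV z hz).ne hGz, hFz⟩

end SupPhi

section Separation

variable {Z W : Type*} [TopologicalSpace Z] [TopologicalSpace W] {φ : ℂ → ℂ → ℝ}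

theorem exists_pos_apply_gt (hφ : IncProp φ)
    (hab : (∀ t : ℝ, 0 ≤ t → φ (t : ℂ) 0 = 0 ∧ φ 0 (t : ℂ) = 0) ∨
      (∀ a : ℝ, 0 < a →
        Tendsto (fun t : ℝ => φ (t : ℂ) (a : ℂ)) atTop atTop ∧
        Tendsto (fun t : ℝ => φ (a : ℂ) (t : ℂ)) atTop atTop))
    {M s : ℝ} (hM : 0 ≤ M) (hs : 0 < s) :
    ∃ t : ℝ, 0 < t ∧ φ M 0 < φ s t ∧ φ 0 M < φ t s := by
  rcases hab with hzero | hlim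
  · have hs' : ‖(0 : ℂ)‖ < ‖(s : ℂ)‖ := by simp [hs.ne']
    have h₁ : ((1 : ℝ) : ℂ) ≠ 0 := one_ne_zero
    refine ⟨1, one_pos, ?_, ?_⟩
    · rw [(hzero M hM).1, ← (hzero 1 zero_le_one).2]
      exact hφ.apply_lt_apply_of_lt_left hs' le_rfl h₁
    · rw [(hzero M hM).2, ← (hzero 1 zero_le_one).1]
      exact hφ.apply_lt_apply_of_lt_right le_rfl hs' h₁
  · obtain ⟨h₁, h₂⟩ := hlim s hs
    exact ((eventually_gt_atTop 0).and ((h₂.eventually_gt_atTop _).and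
      (h₁.eventually_gt_atTop _))).exists

theorem exists_pos_apply_lt (hφc : Continuous fun p : ℂ × ℂ => φ p.1 p.2) {M c₁ c₂ : ℝ}
    (h₁ : φ M 0 < c₁) (h₂ : φ 0 M < c₂) : ∃ δ : ℝ, 0 < δ ∧ φ M δ < c₁ ∧ φ δ M < c₂ := by
  have hleft : ∀ᶠ δ : ℝ in 𝓝 0, φ M δ < c₁ :=
    (hφc.comp (continuous_const.prodMk Complex.continuous_ofReal)).continuousAt.eventually_lt
      continuousAt_const (show φ M ((0 : ℝ) : ℂ) < c₁ by rwa [Complex.ofReal_zero])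
  have hright : ∀ᶠ δ : ℝ in 𝓝 0, φ δ M < c₂ :=
    (hφc.comp (Complex.continuous_ofReal.prodMk continuous_const)).continuousAt.eventually_lt
      continuousAt_const (show φ ((0 : ℝ) : ℂ) M < c₂ by rwa [Complex.ofReal_zero])
  exact (eventually_mem_nhdsWithin.and
    ((hleft.and hright).filter_mono nhdsWithin_le_nhds) : ∀ᶠ δ in 𝓝[>] (0 : ℝ), _).exists

theorem rhoPlus_lt_rhoPlusScalar (hφ : IncProp φ) [Nonempty Z] {F G : C₀(Z, ℂ)}
    {m s t δ : ℝ} (hm : 0 ≤ m) (hms : m < s) (ht : 0 < t) (hG : ‖G‖ ≤ t)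
    (hFG : ∀ z, ‖F z‖ ≤ m ∨ ‖G z‖ ≤ δ) (h₁ : φ ‖F‖ δ < φ s t) (h₂ : φ δ ‖F‖ < φ t s) :
    rhoPlus φ F G < rhoPlusScalar φ s t := by
  have hG' : ∀ z, ‖G z‖ ≤ t := fun z => (G.norm_apply_le z).trans hG
  have hFG' : supPhi φ F G ≤ max (φ m t) (φ ‖F‖ δ) := ciSup_le fun z => (hFG z).elim
    (fun h => le_max_of_le_left (hφ.apply_le_ofReal h (hG' z)))
    (fun h => le_max_of_le_right (hφ.apply_le_ofReal (F.norm_apply_le z) h))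
  have hGF : supPhi φ G F ≤ max (φ t m) (φ δ ‖F‖) := ciSup_le fun z => (hFG z).elim
    (fun h => le_max_of_le_left (hφ.apply_le_ofReal (hG' z) h))
    (fun h => le_max_of_le_right (hφ.apply_le_ofReal h (F.norm_apply_le z)))
  have hms' : ‖(m : ℂ)‖ < ‖(s : ℂ)‖ := by
    rwa [Complex.norm_of_nonneg hm, Complex.norm_of_nonneg (hm.trans hms.le)]
  have ht₀ : (t : ℂ) ≠ 0 := Complex.ofReal_ne_zero.2 ht.ne'
  calc rhoPlus φ F G ≤ max (φ m t) (φ ‖F‖ δ) + max (φ t m) (φ δ ‖F‖) := add_le_add hFG' hGF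
    _ < φ s t + φ t s := add_lt_add
        (max_lt (hφ.apply_lt_apply_of_lt_left hms' le_rfl ht₀) h₁)
        (max_lt (hφ.apply_lt_apply_of_lt_right le_rfl hms' ht₀) h₂)

theorem norm_apply_le_of_forall_exists_rhoPlus_eq (hφc : Continuous fun p : ℂ × ℂ => φ p.1 p.2)
    (hφ : IncProp φ)
    (hab : (∀ t : ℝ, 0 ≤ t → φ (t : ℂ) 0 = 0 ∧ φ 0 (t : ℂ) = 0) ∨
      (∀ a : ℝ, 0 < a →
        Tendsto (fun t : ℝ => φ (t : ℂ) (a : ℂ)) atTop atTop ∧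
        Tendsto (fun t : ℝ => φ (a : ℂ) (t : ℂ)) atTop atTop))
    {F : C₀(Z, ℂ)} {p : Z} {F' : C₀(W, ℂ)} {q : W}
    (H : ∀ t > 0, ∀ δ > 0, ∀ V ∈ 𝓝 p, ∃ G : C₀(Z, ℂ), ∃ G' : C₀(W, ℂ),
      ‖G‖ ≤ t ∧ (∀ z ∉ V, ‖G z‖ < δ) ∧ ‖G' q‖ = t ∧ rhoPlus φ F' G' = rhoPlus φ F G) :
    ‖F' q‖ ≤ ‖F p‖ := by
  have : Nonempty Z := ⟨p⟩
  by_contra! hlt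
  have hs : 0 < ‖F' q‖ := (norm_nonneg _).trans_lt hlt
  obtain ⟨t, ht, h₁, h₂⟩ := exists_pos_apply_gt hφ hab (norm_nonneg F) hs
  obtain ⟨δ, hδ, hδ₁, hδ₂⟩ := exists_pos_apply_lt hφc h₁ h₂
  obtain ⟨m, hpm, hmq⟩ := exists_between hlt
  have hV : {z | ‖F z‖ < m} ∈ 𝓝 p :=
    (isOpen_lt F.continuous.norm continuous_const).mem_nhds hpm
  obtain ⟨G, G', hG, hGV, hG'q, hρ⟩ := H t ht δ hδ _ hV
  have hlower : rhoPlusScalar φ ‖F' q‖ t ≤ rhoPlus φ F' G' := by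
    have hq := rhoPlusScalar_le_rhoPlus hφ F' G' q
    rwa [rhoPlusScalar, hφ.apply_eq_ofReal rfl hG'q, hφ.apply_eq_ofReal hG'q rfl] at hq
  have hupper : rhoPlus φ F G < rhoPlusScalar φ ‖F' q‖ t :=
    rhoPlus_lt_rhoPlusScalar hφ ((norm_nonneg _).trans hpm.le) hmq ht hG
      (fun z => (em (‖F z‖ < m)).imp le_of_lt fun hz => (hGV z hz).le) hδ₁ hδ₂
  linarith

end Separation

theorem smul_mem_of_eq_submodule_or_posPart {Z : Type*} [TopologicalSpace Z]
    {A : Set C₀(Z, ℂ)}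
    (hA : (∃ S : Submodule ℂ C₀(Z, ℂ), A = (S : Set C₀(Z, ℂ))) ∨
      (∃ S : Submodule ℂ C₀(Z, ℂ), A = _root_.posPart (S : Set C₀(Z, ℂ))))
    {c : ℝ} (hc : 0 ≤ c) {g : C₀(Z, ℂ)} (hg : g ∈ A) : (c : ℂ) • g ∈ A := by
  rcases hA with ⟨S, rfl⟩ | ⟨S, rfl⟩
  · exact S.smul_mem _ hg
  · refine ⟨S.smul_mem _ hg.1, fun z => ?_⟩
    obtain ⟨a, ha, hga⟩ := hg.2 z
    exact ⟨c * a, mul_nonneg hc ha, by simp [hga]⟩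

theorem IsStrongBoundaryPoint.exists_norm_eq {Z : Type*} [TopologicalSpace Z]
    {A : Set C₀(Z, ℂ)} {p : Z} (hp : IsStrongBoundaryPoint A p)
    (hA : (∃ S : Submodule ℂ C₀(Z, ℂ), A = (S : Set C₀(Z, ℂ))) ∨
      (∃ S : Submodule ℂ C₀(Z, ℂ), A = _root_.posPart (S : Set C₀(Z, ℂ))))
    {t δ : ℝ} (ht : 0 < t) (hδ : 0 < δ) {V : Set Z} (hV : V ∈ 𝓝 p) :
    ∃ u ∈ A, ‖u p‖ = t ∧ ‖u‖ = t ∧ ∀ z ∉ V, ‖u z‖ < δ := by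
  obtain ⟨u, hu, hup, hun, huV⟩ := hp (δ / t) (div_pos hδ ht) V hV
  have hnorm : ∀ z, ‖((t : ℂ) • u) z‖ = t * ‖u z‖ := fun z => by
    rw [ZeroAtInftyContinuousMap.smul_apply, norm_smul, Complex.norm_of_nonneg ht.le]
  refine ⟨(t : ℂ) • u, smul_mem_of_eq_submodule_or_posPart hA ht.le hu, ?_, ?_, fun z hz => ?_⟩
  · rw [hnorm, hup, norm_one, mul_one]
  · rw [norm_smul, hun, Complex.norm_of_nonneg ht.le, mul_one]
  · rw [hnorm]
    calc t * ‖u z‖ < t * (δ / t) := mul_lt_mul_of_pos_left (huV z hz) ht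
      _ = δ := mul_div_cancel₀ δ ht.ne'

section Isometry

variable {X Y : Type*} [TopologicalSpace X] [TopologicalSpace Y] [Nonempty X] [Nonempty Y]
  {φ : ℂ → ℂ → ℝ} {A : Set C₀(X, ℂ)} {B : Set C₀(Y, ℂ)} {T : C₀(X, ℂ) → C₀(Y, ℂ)}
  {x₀ : X} {y₀ : Y}

theorem norm_map_eq (hφ : IncProp φ)
    (hT : ∀ f ∈ A, ∀ g ∈ A, rhoPlus φ (T f) (T g) = rhoPlus φ f g) {f : C₀(X, ℂ)}
    (hf : f ∈ A) : ‖T f‖ = ‖f‖ :=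
  norm_eq_of_rhoPlus_self_eq hφ (hT f hf f hf)

theorem norm_map_apply_eq_of_peak (hφc : Continuous fun p : ℂ × ℂ => φ p.1 p.2)
    (hφ : IncProp φ) (hT : ∀ f ∈ A, ∀ g ∈ A, rhoPlus φ (T f) (T g) = rhoPlus φ f g)
    (hTsurj : Set.SurjOn T A B) (hy₀ : IsStrongBoundaryPoint B y₀)
    (hpeak : ∀ h ∈ A, T h ∈ Vset B y₀ → ‖h x₀‖ = ‖h‖)
    {u : C₀(X, ℂ)} (hu : u ∈ A) {t : ℝ} (ht : 0 < t) (hux : ‖u x₀‖ = t) (hun : ‖u‖ = t) :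
    ‖T u y₀‖ = t := by
  refine norm_apply_eq_of_forall_nhds_rhoPlus_eq hφc hφ ht one_pos
    ((norm_map_eq hφ hT hu).trans hun) fun V hV => ?_
  obtain ⟨k, hk, hky, hkn, hkV⟩ := hy₀ 1 one_pos V hV
  obtain ⟨h, hh, rfl⟩ := hTsurj hk
  have hhn : ‖h‖ = 1 := (norm_map_eq hφ hT hh).symm.trans hkn
  refine ⟨T h, hkn.le, hkV, ?_⟩
  rw [hT u hu h hh]
  exact rhoPlus_eq_of_norm_apply_eq hφ hun.le hhn.le hux ((hpeak h hh ⟨hk, hky, hkn⟩).trans hhn)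

theorem norm_apply_eq_of_map_peak (hφc : Continuous fun p : ℂ × ℂ => φ p.1 p.2)
    (hφ : IncProp φ) (hT : ∀ f ∈ A, ∀ g ∈ A, rhoPlus φ (T f) (T g) = rhoPlus φ f g)
    (hTsurj : Set.SurjOn T A B) (hx₀ : IsStrongBoundaryPoint A x₀)
    (hy₀ : IsStrongBoundaryPoint B y₀) (hpeak : ∀ h ∈ A, T h ∈ Vset B y₀ → ‖h x₀‖ = ‖h‖)
    {h : C₀(X, ℂ)} (hh : h ∈ A) {t : ℝ} (ht : 0 < t) (hhy : ‖T h y₀‖ = t) (hhn : ‖T h‖ = t) :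
    ‖h x₀‖ = t := by
  refine norm_apply_eq_of_forall_nhds_rhoPlus_eq hφc hφ ht one_pos
    ((norm_map_eq hφ hT hh).symm.trans hhn) fun V hV => ?_
  obtain ⟨u, hu, hux, hun, huV⟩ := hx₀ 1 one_pos V hV
  have hux' : ‖u x₀‖ = 1 := by rw [hux, norm_one]
  refine ⟨u, hun.le, huV, ?_⟩
  rw [← hT h hh u hu]
  exact rhoPlus_eq_of_norm_apply_eq hφ hhn.le ((norm_map_eq hφ hT hu).trans hun).le hhy
    (norm_map_apply_eq_of_peak hφc hφ hT hTsurj hy₀ hpeak hu one_pos hux' hun)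

end Isometry

theorem stmt13_general {X Y : Type*} [TopologicalSpace X] [TopologicalSpace Y]
    (φ : ℂ → ℂ → ℝ) (hφc : Continuous fun p : ℂ × ℂ => φ p.1 p.2)
    (hinc : IncProp φ)
    (A : Set C₀(X, ℂ)) (B : Set C₀(Y, ℂ))
    (hA : (∃ S : Submodule ℂ C₀(X, ℂ), A = (S : Set C₀(X, ℂ))) ∨
          (∃ S : Submodule ℂ C₀(X, ℂ), A = _root_.posPart (S : Set C₀(X, ℂ))))
    (hB : (∃ S : Submodule ℂ C₀(Y, ℂ), B = (S : Set C₀(Y, ℂ))) ∨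
          (∃ S : Submodule ℂ C₀(Y, ℂ), B = _root_.posPart (S : Set C₀(Y, ℂ))))
    (𝒜 : NonUnitalSubalgebra ℂ C₀(X, ℂ)) (ℬ : NonUnitalSubalgebra ℂ C₀(Y, ℂ))
    (hbd𝒜 : ∀ x : X, IsStrongBoundaryPoint A x ↔ InChoquetBoundary 𝒜.toSubmodule x)
    (hbdℬ : ∀ y : Y, IsStrongBoundaryPoint B y ↔ InChoquetBoundary ℬ.toSubmodule y)
    (T : C₀(X, ℂ) → C₀(Y, ℂ)) (hTsurj : Set.SurjOn T A B)
    (hT : ∀ f ∈ A, ∀ g ∈ A,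
      rhoPlus φ (fun y => T f y) (fun y => T g y) =
        rhoPlus φ (fun x => f x) (fun x => g x))
    (hab : (∀ t : ℝ, 0 ≤ t → φ (t : ℂ) 0 = 0 ∧ φ 0 (t : ℂ) = 0) ∨
          (∀ a : ℝ, 0 < a →
            Filter.Tendsto (fun t : ℝ => φ (t : ℂ) (a : ℂ)) Filter.atTop Filter.atTop ∧
            Filter.Tendsto (fun t : ℝ => φ (a : ℂ) (t : ℂ)) Filter.atTop Filter.atTop))
    (y₀ : Y) (hy₀ : InChoquetBoundary ℬ.toSubmodule y₀)
    (x₀ : X) (hx₀ : InChoquetBoundary 𝒜.toSubmodule x₀)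
    (hsingle : (⋂ f ∈ {f : C₀(X, ℂ) | f ∈ A ∧ T f ∈ (1 : ℂ) • Vset B y₀}, maxSet f) ∩ {x : X | InChoquetBoundary 𝒜.toSubmodule x} = {x₀}) :
    ∀ f ∈ A, ‖T f y₀‖ = ‖f x₀‖ := by
  intro f hf
  have : Nonempty X := ⟨x₀⟩
  have : Nonempty Y := ⟨y₀⟩
  have hx₀' := (hbd𝒜 x₀).2 hx₀
  have hy₀' := (hbdℬ y₀).2 hy₀
  have hpeak : ∀ h ∈ A, T h ∈ Vset B y₀ → ‖h x₀‖ = ‖h‖ := fun h hh hTh =>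
    Set.mem_iInter₂.1 (hsingle.ge rfl).1 h ⟨hh, by rwa [one_smul]⟩
  refine le_antisymm ?_ ?_
  · refine norm_apply_le_of_forall_exists_rhoPlus_eq hφc hinc hab fun t ht δ hδ V hV => ?_
    obtain ⟨u, hu, hux, hun, huV⟩ := hx₀'.exists_norm_eq hA ht hδ hV
    exact ⟨u, T u, hun.le, huV,
      norm_map_apply_eq_of_peak hφc hinc hT hTsurj hy₀' hpeak hu ht hux hun, hT f hf u hu⟩
  · refine norm_apply_le_of_forall_exists_rhoPlus_eq hφc hinc hab fun t ht δ hδ V hV => ?_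
    obtain ⟨k, hk, hky, hkn, hkV⟩ := hy₀'.exists_norm_eq hB ht hδ hV
    obtain ⟨h, hh, rfl⟩ := hTsurj hk
    exact ⟨T h, h, hkn.le, hkV,
      norm_apply_eq_of_map_peak hφc hinc hT hTsurj hx₀' hy₀' hpeak hh ht hky hkn,
      (hT f hf h hh).symm⟩

theorem stmt13 {X Y : Type*} [TopologicalSpace X] [LocallyCompactSpace X] [T2Space X] [TopologicalSpace Y] [LocallyCompactSpace Y] [T2Space Y]
    (φ : ℂ → ℂ → ℝ) (hφc : Continuous fun p : ℂ × ℂ => φ p.1 p.2)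
    (hφ0 : ∀ s t : ℂ, 0 ≤ φ s t) (hinc : IncProp φ) (hcon : ConProp φ)
    (A : Set C₀(X, ℂ)) (B : Set C₀(Y, ℂ))
    (hA : (∃ S : Submodule ℂ C₀(X, ℂ), A = (S : Set C₀(X, ℂ))) ∨
          (∃ S : Submodule ℂ C₀(X, ℂ), A = _root_.posPart (S : Set C₀(X, ℂ))))
    (hB : (∃ S : Submodule ℂ C₀(Y, ℂ), B = (S : Set C₀(Y, ℂ))) ∨
          (∃ S : Submodule ℂ C₀(Y, ℂ), B = _root_.posPart (S : Set C₀(Y, ℂ))))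
    (𝒜 : NonUnitalSubalgebra ℂ C₀(X, ℂ)) (ℬ : NonUnitalSubalgebra ℂ C₀(Y, ℂ))
    (h𝒜 : IsFunctionAlgebra 𝒜) (hℬ : IsFunctionAlgebra ℬ)
    (hbd𝒜 : ∀ x : X, IsStrongBoundaryPoint A x ↔ InChoquetBoundary 𝒜.toSubmodule x)
    (hbdℬ : ∀ y : Y, IsStrongBoundaryPoint B y ↔ InChoquetBoundary ℬ.toSubmodule y)
    (hmodA : ModulusSubset A (𝒜 : Set C₀(X, ℂ)))
    (hmodB : ModulusSubset B (ℬ : Set C₀(Y, ℂ)))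
    (T : C₀(X, ℂ) → C₀(Y, ℂ)) (hTmaps : Set.MapsTo T A B) (hTsurj : Set.SurjOn T A B)
    (hT : ∀ f ∈ A, ∀ g ∈ A,
      rhoPlus φ (fun y => T f y) (fun y => T g y) =
        rhoPlus φ (fun x => f x) (fun x => g x))
    (hab : (∀ t : ℝ, 0 ≤ t → φ (t : ℂ) 0 = 0 ∧ φ 0 (t : ℂ) = 0) ∨
          (∀ a : ℝ, 0 < a →
            Filter.Tendsto (fun t : ℝ => φ (t : ℂ) (a : ℂ)) Filter.atTop Filter.atTop ∧
            Filter.Tendsto (fun t : ℝ => φ (a : ℂ) (t : ℂ)) Filter.atTop Filter.atTop))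
    (y₀ : Y) (hy₀ : InChoquetBoundary ℬ.toSubmodule y₀)
    (x₀ : X) (hx₀ : InChoquetBoundary 𝒜.toSubmodule x₀)
    (hsingle : (⋂ f ∈ {f : C₀(X, ℂ) | f ∈ A ∧ T f ∈ (1 : ℂ) • Vset B y₀}, maxSet f) ∩ {x : X | InChoquetBoundary 𝒜.toSubmodule x} = {x₀}) :
    ∀ f ∈ A, ‖T f y₀‖ = ‖f x₀‖ :=
  stmt13_general φ hφc hinc A B hA hB 𝒜 ℬ hbd𝒜 hbdℬ T hTsurj hT hab y₀ hy₀ x₀ hx₀ hsingle
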